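/- In simply-laced type with ϖ_k minuscule and J = I \ {k}, the minimal coset representative of w_J s_k (w_J the longest element of W_J) equals the minimal coset representative of s_θ, the reflection in the highest root θ. -/

import Mathlib

/-- An axiomatized finite crystallographic root system datum, with weight/root
space `V` over `ℚ`, simple roots `α i`, an invariant inner product `B`,
Weyl group `W` acting faithfully on `V`, and the set of roots `isRoot`. -/
structure RootSystemData (I : Type) [Fintype I] [DecidableEq I] where
  V : Type
  [instAddCommGroup : AddCommGroup V]
  [instModule : Module ℚ V]
  W : Type
  [instGroup : Group W]
  α : I → V
  B : V →ₗ[ℚ] V →ₗ[ℚ] ℚ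
  toLin : W →* Module.End ℚ V
  s : I → W
  isRoot : V → Prop
  B_symm : ∀ x y, B x y = B y x
  B_pos : ∀ β, isRoot β → 0 < B β β
  B_inv : ∀ (w : W) (x y : V), B (toLin w x) (toLin w y) = B x y
  root_simple : ∀ i, isRoot (α i)
  root_inv : ∀ (w : W) (β : V), isRoot β → isRoot (toLin w β)
  root_gen : ∀ β, isRoot β → ∃ (w : W) (i : I), β = toLin w (α i)
  root_finite : (setOf isRoot).Finite
  indep : LinearIndependent ℚ α
  s_act : ∀ i x, toLin (s i) x = x - (2 * B (α i) x / B (α i) (α i)) • α i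
  gen : Subgroup.closure (Set.range s) = ⊤
  faithful : Function.Injective toLin
  root_int : ∀ β, isRoot β → ∃ c : I → ℤ, β = ∑ i, (c i : ℚ) • α i
  pos_or_neg : ∀ β, isRoot β →
    (∃ c : I → ℕ, β = ∑ i, (c i : ℚ) • α i) ∨ (∃ c : I → ℕ, -β = ∑ i, (c i : ℚ) • α i)

attribute [instance] RootSystemData.instAddCommGroup RootSystemData.instModule
  RootSystemData.instGroup

namespace RootSystemData

variable {I : Type} [Fintype I] [DecidableEq I] (R : RootSystemData I)

/-- `β` is a positive root. -/
def IsPos (β : R.V) : Prop :=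
  R.isRoot β ∧ ∃ c : I → ℕ, β = ∑ i, (c i : ℚ) • R.α i

/-- The finite set of positive roots. -/
noncomputable def posFinset : Finset R.V :=
  (Set.Finite.subset R.root_finite (fun _ hb => hb.1) : (setOf R.IsPos).Finite).toFinset

/-- Half the sum of the positive roots. -/
noncomputable def ρ : R.V := (2 : ℚ)⁻¹ • ∑ β ∈ R.posFinset, β

/-- The pairing `⟨x, β∨⟩` of `x` with the coroot of `β`. -/
noncomputable def coroot (β x : R.V) : ℚ := 2 * R.B β x / R.B β β

open Classical in
/-- The reflection `s_β ∈ W` in a root `β`. -/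
noncomputable def refl (β : R.V) : R.W :=
  if h : R.isRoot β then
    (R.root_gen β h).choose * R.s (R.root_gen β h).choose_spec.choose *
      (R.root_gen β h).choose⁻¹
  else 1

/-- The length function on the Weyl group. -/
noncomputable def len (w : R.W) : ℕ :=
  sInf {n | ∃ l : List I, l.length = n ∧ (l.map R.s).prod = w}

/-- Bruhat order: generated by multiplication by reflections which increases length. -/
def bruhatLE : R.W → R.W → Prop :=
  Relation.ReflTransGen (fun u v => (∃ β, R.IsPos β ∧ v = R.refl β * u) ∧ R.len u < R.len v)

def bruhatLT (u v : R.W) : Prop := R.bruhatLE u v ∧ u ≠ v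

/-- The parabolic subgroup `W_J`. -/
def WJ (J : Set I) : Subgroup R.W := Subgroup.closure (R.s '' J)

/-- `w` is a minimal-length representative of its coset `w W_J`. -/
def IsMinRep (J : Set I) (w : R.W) : Prop :=
  ∀ z ∈ R.WJ J, R.len w ≤ R.len (w * z)

/-- `β ∈ Δ⁺_J`: positive roots in the span of the simple roots indexed by `J`. -/
def posJ (J : Set I) (β : R.V) : Prop :=
  R.IsPos β ∧ β ∈ Submodule.span ℚ (R.α '' J)

/-- A Bruhat edge `x → x s_β` in the quantum Bruhat graph. -/
def BruhatEdge (x : R.W) (β : R.V) : Prop :=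
  R.IsPos β ∧ R.len (x * R.refl β) = R.len x + 1

/-- A quantum edge `x → x s_β` in the quantum Bruhat graph. -/
def QuantumEdge (x : R.W) (β : R.V) : Prop :=
  R.IsPos β ∧ (R.len (x * R.refl β) : ℚ) = R.len x + 1 - 2 * R.coroot β R.ρ

/-- An edge of the quantum Bruhat graph. -/
def QBGEdge (x : R.W) (β : R.V) : Prop := R.BruhatEdge x β ∨ R.QuantumEdge x β

/-- A quantum root: `ℓ(s_β) = 2⟨ρ, β∨⟩ - 1`. -/
def IsQuantumRoot (β : R.V) : Prop :=
  R.IsPos β ∧ (R.len (R.refl β) : ℚ) = 2 * R.coroot β R.ρ - 1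

/-- A long root (maximal squared length); in simply-laced type all roots are long. -/
def IsLong (β : R.V) : Prop :=
  R.isRoot β ∧ ∀ γ, R.isRoot γ → R.B γ γ ≤ R.B β β

/-- A short root. -/
def IsShort (β : R.V) : Prop := R.isRoot β ∧ ¬ R.IsLong β

def IsSimplyLaced : Prop :=
  ∀ β γ, R.isRoot β → R.isRoot γ → R.B β β = R.B γ γ

def IsIrreducible : Prop :=
  Nonempty I ∧ ∀ J : Set I,
    (∀ i ∈ J, ∀ j ∉ J, R.B (R.α i) (R.α j) = 0) → J = ∅ ∨ J = Set.univ

/-- `θ` is the highest root. -/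
def IsHighestRoot (θ : R.V) : Prop :=
  R.IsPos θ ∧ ∀ β, R.IsPos β → ∃ c : I → ℕ, θ - β = ∑ i, (c i : ℚ) • R.α i

/-- `ϖ` is the fundamental weight associated to `k`. -/
def IsFundamental (k : I) (ϖ : R.V) : Prop :=
  ∀ i, R.coroot (R.α i) ϖ = if i = k then 1 else 0

/-- `ϖ` is minuscule. -/
def IsMinuscule (ϖ : R.V) : Prop :=
  ∀ β, R.isRoot β → R.coroot β ϖ ∈ ({-1, 0, 1} : Set ℚ)

/-- A strict total order on `Δ⁺` which is a reflection (convex) order. -/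
def IsReflectionOrder (lt : R.V → R.V → Prop) : Prop :=
  (∀ β, ¬ lt β β) ∧ (∀ a b c, lt a b → lt b c → lt a c) ∧
  (∀ β γ, R.IsPos β → R.IsPos γ → β ≠ γ → lt β γ ∨ lt γ β) ∧
  (∀ β γ, R.IsPos β → R.IsPos γ → R.IsPos (β + γ) →
    (lt β (β + γ) ∧ lt (β + γ) γ) ∨ (lt γ (β + γ) ∧ lt (β + γ) β))

end RootSystemData

open RootSystemData in
/-- A directed path in the quantum Bruhat graph with the given list of labels. -/
def QBGPath {I : Type} [Fintype I] [DecidableEq I] (R : RootSystemData I) :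
    R.W → List R.V → R.W → Prop
  | x, [], y => x = y
  | x, β :: l, y => R.QBGEdge x β ∧ QBGPath R (x * R.refl β) l y

open RootSystemData in
/-- A directed path in the Bruhat graph (Bruhat edges only). -/
def BGPath {I : Type} [Fintype I] [DecidableEq I] (R : RootSystemData I) :
    R.W → List R.V → R.W → Prop
  | x, [], y => x = y
  | x, β :: l, y => R.BruhatEdge x β ∧ BGPath R (x * R.refl β) l y

/-- The Cartan pairing `⟨α_j, α_i∨⟩` of type `B_n` (Bourbaki labelling, shifted
to be 0-based: the short simple root is the last one, index `n-1`). -/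
def BCartan (n : ℕ) (i j : Fin n) : ℚ :=
  if i = j then 2
  else if (i : ℕ) = n - 1 ∧ (j : ℕ) + 1 = n - 1 then -2
  else if ((i : ℕ) + 1 = j ∨ (j : ℕ) + 1 = i) then -1
  else 0

/-- `R` is of type `B_n` (via the identification `e` of its index set with `Fin n`). -/
def IsTypeB {I : Type} [Fintype I] [DecidableEq I] (R : RootSystemData I)
    (n : ℕ) (e : I ≃ Fin n) : Prop :=
  2 ≤ n ∧ ∀ i j, R.coroot (R.α i) (R.α j) = BCartan n (e i) (e j)

/-- The product `s_{a+1} s_{a+2} ⋯ s_{b+1}` (0-based: indices `a, a+1, …, b`). -/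
noncomputable def sSeq {n : ℕ} (hn : 0 < n) (R : RootSystemData (Fin n)) (a b : ℕ) : R.W :=
  ((List.range (b + 1 - a)).map (fun t => R.s ⟨(a + t) % n, Nat.mod_lt _ hn⟩)).prod

/-- The sum `α_{a+1} + ⋯ + α_b` of simple roots (0-based half-open interval `[a, b)`). -/
def aSum {n : ℕ} (hn : 0 < n) (R : RootSystemData (Fin n)) (a b : ℕ) : R.V :=
  ∑ t ∈ Finset.Ico a b, R.α ⟨t % n, Nat.mod_lt _ hn⟩

/-!
Put `β = w_J α_k`. Since `ϖ_k` is fixed by `W_J`, the functional `⟨·, ϖ_k⟩` is `W_J`-invariant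
and reads off the `α_k`-coefficient of a root; minuscularity forces that coefficient of `θ` to
be `1`. Hence `w_J⁻¹ θ = α_k + η` with `η` a nonnegative combination of the `α_j`, `j ∈ J`, and
`θ - β = w_J η`. As the longest element `w_J` sends each such `α_j` to a negative root,
`θ - β` is a nonpositive combination of simple roots, while it is nonnegative because `θ` is
highest. So `θ = w_J α_k`, `s_θ = w_J s_k w_J⁻¹` and `(w_J s_k)⁻¹ s_θ = w_J⁻¹ ∈ W_J`.
-/

namespace RootSystemData

variable {I : Type} [Fintype I] [DecidableEq I] (R : RootSystemData I)

lemma toLin_mul_apply (u v : R.W) (x : R.V) :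
    R.toLin (u * v) x = R.toLin u (R.toLin v x) := by
  rw [map_mul, Module.End.mul_apply]

lemma toLin_toLin_inv_apply (w : R.W) (x : R.V) : R.toLin w (R.toLin w⁻¹ x) = x := by
  rw [← toLin_mul_apply, mul_inv_cancel, map_one, Module.End.one_apply]

lemma B_α_self_ne_zero (i : I) : R.B (R.α i) (R.α i) ≠ 0 :=
  (R.B_pos _ (R.root_simple i)).ne'

lemma toLin_s_α (i : I) : R.toLin (R.s i) (R.α i) = -R.α i := by
  rw [R.s_act, mul_div_assoc, div_self (R.B_α_self_ne_zero i), mul_one, two_smul]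
  abel

lemma toLin_s_toLin_s (i : I) (x : R.V) : R.toLin (R.s i) (R.toLin (R.s i) x) = x := by
  rw [R.s_act (x := x), map_sub, map_smul, toLin_s_α, R.s_act]
  module

lemma s_mul_self (i : I) : R.s i * R.s i = 1 :=
  R.faithful <| LinearMap.ext fun x => by
    rw [toLin_mul_apply, toLin_s_toLin_s, map_one, Module.End.one_apply]

lemma s_inv (i : I) : (R.s i)⁻¹ = R.s i :=
  inv_eq_of_mul_eq_one_right (R.s_mul_self i)

lemma toLin_conj_s_apply (w : R.W) (i : I) (x : R.V) :
    R.toLin (w * R.s i * w⁻¹) x = x - (2 * R.B (R.toLin w (R.α i)) x /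
      R.B (R.toLin w (R.α i)) (R.toLin w (R.α i))) • R.toLin w (R.α i) := by
  rw [toLin_mul_apply, toLin_mul_apply, R.s_act, map_sub, map_smul, toLin_toLin_inv_apply,
    ← R.B_inv w (R.α i) (R.toLin w⁻¹ x), toLin_toLin_inv_apply, R.B_inv]

lemma refl_apply {β : R.V} (h : R.isRoot β) (x : R.V) :
    R.toLin (R.refl β) x = x - (2 * R.B β x / R.B β β) • β := by
  rw [refl, dif_pos h, toLin_conj_s_apply, ← (R.root_gen β h).choose_spec.choose_spec]

lemma refl_toLin_α (w : R.W) (i : I) : R.refl (R.toLin w (R.α i)) = w * R.s i * w⁻¹ :=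
  R.faithful <| LinearMap.ext fun x => by
    rw [refl_apply _ (R.root_inv w _ (R.root_simple i)), toLin_conj_s_apply]

lemma refl_α (i : I) : R.refl (R.α i) = R.s i := by
  simpa using R.refl_toLin_α 1 i

lemma root_ne_zero {β : R.V} (h : R.isRoot β) : β ≠ 0 := by
  rintro rfl
  simpa using R.B_pos 0 h

lemma isRoot_neg {β : R.V} (h : R.isRoot β) : R.isRoot (-β) := by
  obtain ⟨w, i, rfl⟩ := R.root_gen β h
  rw [← map_neg, ← toLin_s_α, ← toLin_mul_apply]
  exact R.root_inv _ _ (R.root_simple i)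

lemma isPos_α (i : I) : R.IsPos (R.α i) :=
  ⟨R.root_simple i, Pi.single i 1, by simp [Pi.single_apply, ite_smul]⟩

def posCone : PointedCone ℚ R.V := PointedCone.hull ℚ (Set.range R.α)

lemma sum_natCast_smul_α_mem_posCone (c : I → ℕ) : ∑ i, (c i : ℚ) • R.α i ∈ R.posCone :=
  Submodule.sum_mem _ fun i _ => by
    rw [Nat.cast_smul_eq_nsmul]
    exact nsmul_mem (PointedCone.subset_hull (Set.mem_range_self i)) _

lemma IsPos.mem_posCone {β : R.V} (h : R.IsPos β) : β ∈ R.posCone := by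
  obtain ⟨-, c, rfl⟩ := h
  exact R.sum_natCast_smul_α_mem_posCone c

lemma exists_nonneg_coeffs_of_mem_posCone {v : R.V} (hv : v ∈ R.posCone) :
    ∃ c : I → ℚ, (∀ i, 0 ≤ c i) ∧ v = ∑ i, c i • R.α i := by
  obtain ⟨c, rfl⟩ := Submodule.mem_span_range_iff_exists_fun _ |>.mp hv
  exact ⟨fun i => c i, fun i => (c i).2, rfl⟩

lemma eq_zero_of_mem_posCone_of_neg_mem {v : R.V} (hv : v ∈ R.posCone)
    (hv' : -v ∈ R.posCone) : v = 0 := by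
  obtain ⟨c, hc, rfl⟩ := R.exists_nonneg_coeffs_of_mem_posCone hv
  obtain ⟨d, hd, hvd⟩ := R.exists_nonneg_coeffs_of_mem_posCone hv'
  have hsum : ∑ i, (c i + d i) • R.α i = ∑ i, (0 : ℚ) • R.α i := by
    simp [add_smul, Finset.sum_add_distrib, ← hvd]
  have hcd := Fintype.linearIndependent_iffₛ.mp R.indep _ _ hsum
  refine Finset.sum_eq_zero fun i _ => ?_
  rw [show c i = 0 by linarith [hc i, hd i, hcd i], zero_smul]

lemma not_isPos_neg {β : R.V} (h : R.IsPos β) : ¬ R.IsPos (-β) := fun h' =>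
  R.root_ne_zero h.1 (R.eq_zero_of_mem_posCone_of_neg_mem h.mem_posCone h'.mem_posCone)

lemma isPos_or_isPos_neg {β : R.V} (h : R.isRoot β) : R.IsPos β ∨ R.IsPos (-β) :=
  (R.pos_or_neg β h).imp (fun hc => ⟨h, hc⟩) (fun hc => ⟨R.isRoot_neg h, hc⟩)

lemma eq_natCast_smul_α_of_toLin_s_neg (i : I) {β : R.V} (hβ : R.IsPos β)
    (hneg : R.IsPos (-R.toLin (R.s i) β)) : ∃ n : ℕ, β = (n : ℚ) • R.α i := by
  obtain ⟨-, c, hc⟩ := hβ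
  obtain ⟨-, d, hd⟩ := hneg
  have hsum : ∑ j, ((c j : ℚ) + d j) • R.α j = ∑ j,
      (Pi.single (M := fun _ => ℚ) i (2 * R.B (R.α i) β / R.B (R.α i) (R.α i)) j) • R.α j := by
    simp only [Pi.single_apply, ite_smul, zero_smul, Finset.sum_ite_eq', Finset.mem_univ, if_true,
      add_smul, Finset.sum_add_distrib, ← hc, ← hd, R.s_act]
    abel
  have hcd := Fintype.linearIndependent_iffₛ.mp R.indep _ _ hsum
  refine ⟨c i, hc.trans (Finset.sum_eq_single i (fun j _ hji => ?_) (by simp))⟩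
  have := hcd j
  rw [Pi.single_eq_of_ne hji] at this
  rw [show (c j : ℚ) = 0 by linarith [(d j).cast_nonneg (α := ℚ), (c j).cast_nonneg (α := ℚ)],
    zero_smul]

lemma isPos_toLin_s (hsl : R.IsSimplyLaced) (i : I) {β : R.V} (hβ : R.IsPos β)
    (hne : β ≠ R.α i) : R.IsPos (R.toLin (R.s i) β) := by
  refine (R.isPos_or_isPos_neg (R.root_inv _ _ hβ.1)).resolve_right fun hneg => hne ?_
  obtain ⟨n, rfl⟩ := R.eq_natCast_smul_α_of_toLin_s_neg i hβ hneg
  have hlen := hsl _ _ hβ.1 (R.root_simple i)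
  simp only [map_smul, LinearMap.smul_apply, smul_eq_mul] at hlen
  have hn : (n : ℚ) * n = 1 := by
    have := R.B_α_self_ne_zero i
    field_simp at hlen
    linarith
  rw [show (n : ℚ) = 1 by nlinarith [n.cast_nonneg (α := ℚ)], one_smul]

lemma prod_map_s_reverse (l : List I) : (l.reverse.map R.s).prod = (l.map R.s).prod⁻¹ := by
  induction l with
  | nil => simp
  | cons i t ih =>
    rw [List.reverse_cons, List.map_append, List.prod_append, ih]
    simp [R.s_inv]

lemma exists_prod_map_s_eq (w : R.W) : ∃ l : List I, (l.map R.s).prod = w := by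
  have hw : w ∈ Subgroup.closure (Set.range R.s) := R.gen ▸ Subgroup.mem_top w
  induction hw using Subgroup.closure_induction with
  | mem x hx => obtain ⟨i, rfl⟩ := hx; exact ⟨[i], by simp⟩
  | one => exact ⟨[], rfl⟩
  | mul x y _ _ hx hy =>
    obtain ⟨l, rfl⟩ := hx
    obtain ⟨l', rfl⟩ := hy
    exact ⟨l ++ l', by simp⟩
  | inv x _ hx =>
    obtain ⟨l, rfl⟩ := hx
    exact ⟨l.reverse, R.prod_map_s_reverse l⟩

lemma len_le_length {w : R.W} {l : List I} (h : (l.map R.s).prod = w) : R.len w ≤ l.length :=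
  Nat.sInf_le ⟨l, rfl, h⟩

lemma exists_reduced_word (w : R.W) :
    ∃ l : List I, l.length = R.len w ∧ (l.map R.s).prod = w := by
  obtain ⟨l, hl⟩ := R.exists_prod_map_s_eq w
  exact Nat.sInf_mem (s := {n | ∃ l : List I, l.length = n ∧ (l.map R.s).prod = w})
    ⟨_, l, rfl, hl⟩

lemma exists_shorter_word_of_not_isPos (hsl : R.IsSimplyLaced) (l : List I) (j : I)
    (h : ¬ R.IsPos (R.toLin (l.map R.s).prod (R.α j))) :
    ∃ l' : List I, l'.length + 1 = l.length ∧ (l'.map R.s).prod = (l.map R.s).prod * R.s j := by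
  induction l with
  | nil => exact absurd (by simpa using R.isPos_α j) h
  | cons i t ih =>
    by_cases ht : R.IsPos (R.toLin (t.map R.s).prod (R.α j))
    · have hi : R.toLin (t.map R.s).prod (R.α j) = R.α i := by
        by_contra hne
        exact h (by simpa [toLin_mul_apply] using R.isPos_toLin_s hsl i ht hne)
      have hconj := R.refl_toLin_α (t.map R.s).prod j
      rw [hi, refl_α] at hconj
      refine ⟨t, rfl, ?_⟩
      simp [hconj, mul_assoc, R.s_mul_self]
    · obtain ⟨t', ht', hp⟩ := ih ht
      exact ⟨i :: t', by simp [ht'], by simp [hp, mul_assoc]⟩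

lemma len_lt_len_mul_s (hsl : R.IsSimplyLaced) {w : R.W} {j : I}
    (h : R.IsPos (R.toLin w (R.α j))) : R.len w < R.len (w * R.s j) := by
  obtain ⟨l, hl, hp⟩ := R.exists_reduced_word (w * R.s j)
  have hnot : ¬ R.IsPos (R.toLin (l.map R.s).prod (R.α j)) := by
    rw [hp, toLin_mul_apply, toLin_s_α, map_neg]
    exact R.not_isPos_neg h
  obtain ⟨l', hl', hp'⟩ := R.exists_shorter_word_of_not_isPos hsl l j hnot
  have := R.len_le_length (l := l') (by rw [hp', hp, mul_assoc, s_mul_self, mul_one])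
  omega

lemma toLin_eq_self_of_mem_WJ {J : Set I} {x : R.V} (hx : ∀ i ∈ J, R.coroot (R.α i) x = 0)
    {w : R.W} (hw : w ∈ R.WJ J) : R.toLin w x = x := by
  induction hw using Subgroup.closure_induction with
  | mem w hw =>
    obtain ⟨i, hi, rfl⟩ := hw
    have hxi := hx i hi
    rw [coroot] at hxi
    rw [R.s_act, hxi, zero_smul, sub_zero]
  | one => rw [map_one, Module.End.one_apply]
  | mul u v _ _ hu hv => rw [toLin_mul_apply, hv, hu]
  | inv w _ hw =>
    conv_lhs => rw [← hw]
    rw [← toLin_mul_apply, inv_mul_cancel, map_one, Module.End.one_apply]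

lemma B_toLin_of_mem_WJ {J : Set I} {x : R.V} (hx : ∀ i ∈ J, R.coroot (R.α i) x = 0)
    {w : R.W} (hw : w ∈ R.WJ J) (v : R.V) : R.B (R.toLin w v) x = R.B v x := by
  conv_lhs => rw [← R.toLin_eq_self_of_mem_WJ hx hw]
  exact R.B_inv w v x

lemma B_nonneg_of_mem_posCone {x v : R.V} (hx : ∀ i, 0 ≤ R.B (R.α i) x)
    (hv : v ∈ R.posCone) : 0 ≤ R.B v x := by
  obtain ⟨c, hc, rfl⟩ := R.exists_nonneg_coeffs_of_mem_posCone hv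
  rw [map_sum, LinearMap.sum_apply]
  refine Finset.sum_nonneg fun i _ => ?_
  rw [map_smul, LinearMap.smul_apply, smul_eq_mul]
  exact mul_nonneg (hc i) (hx i)

lemma isPos_of_B_pos {x β : R.V} (hx : ∀ i, 0 ≤ R.B (R.α i) x) (hβ : R.isRoot β)
    (h : 0 < R.B β x) : R.IsPos β :=
  (R.isPos_or_isPos_neg hβ).resolve_right fun hneg => by
    have := R.B_nonneg_of_mem_posCone hx hneg.mem_posCone
    rw [map_neg, LinearMap.neg_apply] at this
    linarith

section Fundamental

variable {R} {k : I} {ϖ : R.V}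

lemma IsFundamental.B_α (h : R.IsFundamental k ϖ) (i : I) :
    R.B (R.α i) ϖ = if i = k then R.B (R.α i) (R.α i) / 2 else 0 := by
  have hi := h i
  have := R.B_α_self_ne_zero i
  rw [coroot] at hi
  split_ifs at hi ⊢ <;> field_simp at hi ⊢ <;> linarith

lemma IsFundamental.B_α_nonneg (h : R.IsFundamental k ϖ) (i : I) : 0 ≤ R.B (R.α i) ϖ := by
  have := R.B_pos _ (R.root_simple i)
  rw [h.B_α]
  split_ifs <;> positivity

lemma IsFundamental.B_sum_smul_α (h : R.IsFundamental k ϖ) (c : I → ℚ) :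
    R.B (∑ i, c i • R.α i) ϖ = c k * (R.B (R.α k) (R.α k) / 2) := by
  simp [h.B_α]

lemma IsFundamental.sub_α_mem_hull_of_B_eq (h : R.IsFundamental k ϖ) {γ : R.V}
    (hγ : R.IsPos γ) (hB : R.B γ ϖ = R.B (R.α k) (R.α k) / 2) :
    γ - R.α k ∈ PointedCone.hull ℚ (R.α '' {i | i ≠ k}) := by
  obtain ⟨-, c, rfl⟩ := hγ
  have hck : c k = 1 := by
    have := R.B_α_self_ne_zero k
    rw [h.B_sum_smul_α] at hB
    field_simp at hB
    exact_mod_cast hB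
  rw [← Finset.add_sum_erase _ _ (Finset.mem_univ k), hck, Nat.cast_one, one_smul,
    add_sub_cancel_left]
  refine Submodule.sum_mem _ fun i hi => ?_
  rw [Nat.cast_smul_eq_nsmul]
  exact nsmul_mem
    (PointedCone.subset_hull (Set.mem_image_of_mem R.α (Finset.ne_of_mem_erase hi))) _

lemma IsHighestRoot.B_fundamental (hsl : R.IsSimplyLaced) {θ : R.V} (hθ : R.IsHighestRoot θ)
    (hfund : R.IsFundamental k ϖ) (hmin : R.IsMinuscule ϖ) :
    R.B θ ϖ = R.B (R.α k) (R.α k) / 2 := by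
  have ha := R.B_pos _ (R.root_simple k)
  have hge : R.B (R.α k) ϖ ≤ R.B θ ϖ := by
    obtain ⟨c, hc⟩ := hθ.2 _ (R.isPos_α k)
    have := R.B_nonneg_of_mem_posCone hfund.B_α_nonneg
      (hc ▸ R.sum_natCast_smul_α_mem_posCone c)
    rw [map_sub, LinearMap.sub_apply] at this
    linarith
  rw [hfund.B_α, if_pos rfl] at hge
  have hcoroot := hmin θ hθ.1.1
  rw [coroot, hsl θ (R.α k) hθ.1.1 (R.root_simple k)] at hcoroot
  simp only [Set.mem_insert_iff, Set.mem_singleton_iff] at hcoroot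
  rcases hcoroot with h | h | h <;> field_simp at h <;> linarith

end Fundamental

section Longest

variable {R} {J : Set I} {w : R.W}

lemma isPos_neg_toLin_α_of_isLongest (hsl : R.IsSimplyLaced)
    (hw : w ∈ R.WJ J ∧ ∀ z ∈ R.WJ J, R.len z ≤ R.len w) {i : I} (hi : i ∈ J) :
    R.IsPos (-R.toLin w (R.α i)) :=
  (R.isPos_or_isPos_neg (R.root_inv w _ (R.root_simple i))).resolve_left fun hpos =>
    (R.len_lt_len_mul_s hsl hpos).not_ge
      (hw.2 _ (mul_mem hw.1 (Subgroup.subset_closure ⟨i, hi, rfl⟩)))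

lemma neg_toLin_mem_posCone_of_isLongest (hsl : R.IsSimplyLaced)
    (hw : w ∈ R.WJ J ∧ ∀ z ∈ R.WJ J, R.len z ≤ R.len w) {η : R.V}
    (hη : η ∈ PointedCone.hull ℚ (R.α '' J)) : -R.toLin w η ∈ R.posCone := by
  have hle : PointedCone.hull ℚ (R.α '' J) ≤ R.posCone.comap (-R.toLin w) :=
    Submodule.span_le.mpr <| by
      rintro _ ⟨i, hi, rfl⟩
      exact (isPos_neg_toLin_α_of_isLongest hsl hw hi).mem_posCone
  exact hle hη

theorem IsHighestRoot.eq_toLin_longest_α (hsl : R.IsSimplyLaced) {k : I} {ϖ : R.V}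
    (hfund : R.IsFundamental k ϖ) (hmin : R.IsMinuscule ϖ) {wJ : R.W}
    (hwJ : wJ ∈ R.WJ {i | i ≠ k} ∧ ∀ z ∈ R.WJ {i | i ≠ k}, R.len z ≤ R.len wJ) {θ : R.V}
    (hθ : R.IsHighestRoot θ) : θ = R.toLin wJ (R.α k) := by
  have hfix : ∀ i ∈ {i | i ≠ k}, R.coroot (R.α i) ϖ = 0 := fun i (hi : i ≠ k) => by
    simpa [hi] using hfund i
  have hBθ := hθ.B_fundamental hsl hfund hmin
  have hβ : R.IsPos (R.toLin wJ (R.α k)) := by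
    refine R.isPos_of_B_pos hfund.B_α_nonneg (R.root_inv _ _ (R.root_simple k)) ?_
    rw [R.B_toLin_of_mem_WJ hfix hwJ.1, hfund.B_α, if_pos rfl]
    exact half_pos (R.B_pos _ (R.root_simple k))
  have hBγ : R.B (R.toLin wJ⁻¹ θ) ϖ = R.B (R.α k) (R.α k) / 2 := by
    rw [R.B_toLin_of_mem_WJ hfix (inv_mem hwJ.1), hBθ]
  have hγ : R.IsPos (R.toLin wJ⁻¹ θ) :=
    R.isPos_of_B_pos hfund.B_α_nonneg (R.root_inv _ _ hθ.1.1)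
      (hBγ ▸ half_pos (R.B_pos _ (R.root_simple k)))
  have hle : θ - R.toLin wJ (R.α k) ∈ R.posCone := by
    obtain ⟨c, hc⟩ := hθ.2 _ hβ
    exact hc ▸ R.sum_natCast_smul_α_mem_posCone c
  have hge : -(θ - R.toLin wJ (R.α k)) ∈ R.posCone := by
    have := neg_toLin_mem_posCone_of_isLongest hsl hwJ (hfund.sub_α_mem_hull_of_B_eq hγ hBγ)
    rwa [map_sub, toLin_toLin_inv_apply] at this
  exact sub_eq_zero.mp (R.eq_zero_of_mem_posCone_of_neg_mem hle hge)

end Longest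

end RootSystemData

theorem stmt11_general {I : Type} [Fintype I] [DecidableEq I] (R : RootSystemData I)
    (hsl : R.IsSimplyLaced)
    (k : I) (ϖ : R.V) (hfund : R.IsFundamental k ϖ) (hmin : R.IsMinuscule ϖ)
    (J : Set I) (hJ : J = {i | i ≠ k})
    (wJ : R.W) (hwJ : wJ ∈ R.WJ J ∧ ∀ z ∈ R.WJ J, R.len z ≤ R.len wJ)
    (θ : R.V) (hθ : R.IsHighestRoot θ) :
    (wJ * R.s k)⁻¹ * R.refl θ ∈ R.WJ J := by
  subst hJ
  rw [hθ.eq_toLin_longest_α hsl hfund hmin hwJ, R.refl_toLin_α, inv_mul_cancel_left]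
  exact inv_mem hwJ.1

/-- In simply-laced type with `ϖ_k` minuscule, the minimal coset representative
of `w_J s_k` equals that of `s_θ` (i.e. they lie in the same coset of `W_J`). -/
theorem stmt11 {I : Type} [Fintype I] [DecidableEq I] (R : RootSystemData I)
    (hirr : R.IsIrreducible) (hsl : R.IsSimplyLaced)
    (k : I) (ϖ : R.V) (hfund : R.IsFundamental k ϖ) (hmin : R.IsMinuscule ϖ)
    (J : Set I) (hJ : J = {i | i ≠ k})
    (wJ : R.W) (hwJ : wJ ∈ R.WJ J ∧ ∀ z ∈ R.WJ J, R.len z ≤ R.len wJ)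
    (θ : R.V) (hθ : R.IsHighestRoot θ) :
    (wJ * R.s k)⁻¹ * R.refl θ ∈ R.WJ J :=
  stmt11_general R hsl k ϖ hfund hmin J hJ wJ hwJ θ hθ
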